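/- arXiv:2101.08357 — 2 statements merged into one kernel-verified Lean document; each statement's English description precedes it below -/
import Mathlib

section
/- Let V be a complex Hilbert space and T, Q bounded selfadjoint operators on V with Q nonnegative. Then I + Q + iT is boundedly invertible, and the operator C := (I − Q + iT)(I + Q + iT)⁻¹ is a Ritt operator: the spectrum of C is contained in the closed unit disk, and sup{‖(z − 1)(zI − C)⁻¹‖ : z ∈ ℂ, |z| > 1} < ∞ (in particular zI − C is boundedly invertible for every |z| > 1). -/
/-! With `A = I + Q + iT` and `B = I - Q + iT`, for `z ≠ 1` one has
`z A - B = (z - 1) (I + ζ Q + iT)` with `ζ = (z + 1) / (z - 1)`, and `Re ζ ≥ 0` as soon as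
`|z| ≥ 1`. Every `S = I + ζ Q + iT` with `Re ζ ≥ 0` satisfies `Re ⟨u, S u⟩ ≥ ‖u‖²`, hence is
invertible with `‖S⁻¹‖ ≤ 1`. Since `z I - C = (z A - B) A⁻¹`, this gives
`(z - 1) (z I - C)⁻¹ = A (I + ζ Q + iT)⁻¹`, of norm at most `‖A‖`. -/

open scoped InnerProductSpace

theorem Ring.inverse_smul {𝕜 R : Type*} [Field 𝕜] [Ring R] [Algebra 𝕜 R] {c : 𝕜} (hc : c ≠ 0)
    (x : R) : Ring.inverse (c • x) = c⁻¹ • Ring.inverse x := by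
  by_cases hx : IsUnit x
  · have hcx : IsUnit (c • x) := by
      rw [← Units.smul_mk0 hc]
      exact (isUnit_smul_iff _ x).mpr hx
    rw [← mul_one (Ring.inverse (c • x)), Ring.inverse_mul_eq_iff_eq_mul _ _ _ hcx,
      smul_mul_smul_comm, mul_inv_cancel₀ hc, one_smul, Ring.mul_inverse_cancel x hx]
  · have hcx : ¬IsUnit (c • x) := by
      rwa [← Units.smul_mk0 hc, isUnit_smul_iff]
    rw [Ring.inverse_non_unit x hx, Ring.inverse_non_unit _ hcx, smul_zero]

theorem spectrum_subset_closedBall_of_isUnit {𝕜 R : Type*} [NormedField 𝕜] [Ring R]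
    [Algebra 𝕜 R] {a : R} {r : ℝ} (h : ∀ z : 𝕜, r < ‖z‖ → IsUnit (z • 1 - a)) :
    spectrum 𝕜 a ⊆ Metric.closedBall 0 r := by
  intro z hz
  rw [mem_closedBall_zero_iff]
  by_contra! hrz
  exact spectrum.mem_iff.mp hz (by rw [Algebra.algebraMap_eq_smul_one]; exact h z hrz)

theorem ContinuousLinearMap.norm_ringInverse_le_one {𝕜 E : Type*} [NontriviallyNormedField 𝕜]
    [NormedAddCommGroup E] [NormedSpace 𝕜 E] {S : E →L[𝕜] E} (hS : ∀ u, ‖u‖ ≤ ‖S u‖) :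
    ‖Ring.inverse S‖ ≤ 1 := by
  by_cases hSu : IsUnit S
  · refine opNorm_le_bound _ zero_le_one fun v => ?_
    calc ‖Ring.inverse S v‖ ≤ ‖S (Ring.inverse S v)‖ := hS _
      _ = 1 * ‖v‖ := by
        change ‖(S * Ring.inverse S) v‖ = _
        rw [Ring.mul_inverse_cancel S hSu, one_apply_eq_self, one_mul]
  · simp [Ring.inverse_non_unit S hSu]

theorem Complex.re_add_one_div_sub_one_nonneg {z : ℂ} (hz : 1 ≤ ‖z‖) :
    0 ≤ ((z + 1) / (z - 1)).re := by
  have hsq : 1 ≤ z.re * z.re + z.im * z.im := by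
    rw [← normSq_apply, ← Complex.sq_norm]
    nlinarith
  rw [div_re, ← add_div]
  apply div_nonneg _ (normSq_nonneg _)
  simp only [add_re, sub_re, one_re, add_im, sub_im, one_im]
  nlinarith

section Coercive

variable {V : Type*} [NormedAddCommGroup V] [InnerProductSpace ℂ V] {S : V →L[ℂ] V}

theorem norm_le_norm_apply_of_sq_norm_le_re_inner (hS : ∀ u, ‖u‖ ^ 2 ≤ (⟪u, S u⟫_ℂ).re)
    (u : V) : ‖u‖ ≤ ‖S u‖ := by
  rcases eq_or_ne u 0 with rfl | hu
  · simp
  have hpos : 0 < ‖u‖ := norm_pos_iff.mpr hu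
  have : ‖u‖ * ‖u‖ ≤ ‖u‖ * ‖S u‖ := by
    calc ‖u‖ * ‖u‖ = ‖u‖ ^ 2 := (sq _).symm
      _ ≤ (⟪u, S u⟫_ℂ).re := hS u
      _ ≤ ‖⟪u, S u⟫_ℂ‖ := Complex.re_le_norm _
      _ ≤ ‖u‖ * ‖S u‖ := norm_inner_le_norm u (S u)
  exact le_of_mul_le_mul_left this hpos

theorem isUnit_of_sq_norm_le_re_inner [CompleteSpace V]
    (hS : ∀ u, ‖u‖ ^ 2 ≤ (⟪u, S u⟫_ℂ).re) : IsUnit S := by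
  have hanti : AntilipschitzWith 1 S :=
    S.antilipschitz_of_bound fun u => by
      simpa using norm_le_norm_apply_of_sq_norm_le_re_inner hS u
  have hclosed : IsClosed (LinearMap.range (S : V →ₗ[ℂ] V) : Set V) := by
    simpa [LinearMap.coe_range] using hanti.isClosed_range S.uniformContinuous
  have : CompleteSpace (LinearMap.range (S : V →ₗ[ℂ] V)) := hclosed.completeSpace_coe
  -- a vector orthogonal to the range is orthogonal to its own image, hence zero
  have hrange : LinearMap.range (S : V →ₗ[ℂ] V) = ⊤ := by
    rw [← Submodule.orthogonal_eq_bot_iff, Submodule.eq_bot_iff]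
    intro v hv
    have hvS : ⟪v, S v⟫_ℂ = 0 := by
      rw [← inner_conj_symm, hv (S v) (LinearMap.mem_range_self _ v), map_zero]
    have := hS v
    rw [hvS, Complex.zero_re] at this
    exact norm_eq_zero.mp (by nlinarith [norm_nonneg v])
  exact ContinuousLinearMap.isUnit_iff_bijective.mpr
    ⟨hanti.injective, LinearMap.range_eq_top.mp hrange⟩

end Coercive

section Cayley

variable {V : Type*} [NormedAddCommGroup V] [InnerProductSpace ℂ V] {T Q : V →L[ℂ] V}

theorem smul_sub_eq_smul_one_add_smul_add_I_smul {z : ℂ} (hz : z ≠ 1) :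
    z • (1 + Q + Complex.I • T) - (1 - Q + Complex.I • T)
      = (z - 1) • (1 + ((z + 1) / (z - 1)) • Q + Complex.I • T) := by
  conv_rhs => rw [smul_add, smul_add, smul_smul, mul_div_cancel₀ _ (sub_ne_zero.mpr hz)]
  module

variable [CompleteSpace V]

theorem sq_norm_le_re_inner_one_add_smul_add_I_smul (hT : IsSelfAdjoint T)
    (hQ : IsSelfAdjoint Q) (hQnn : ∀ u : V, 0 ≤ (⟪u, Q u⟫_ℂ).re) {ζ : ℂ} (hζ : 0 ≤ ζ.re)
    (u : V) : ‖u‖ ^ 2 ≤ (⟪u, (1 + ζ • Q + Complex.I • T) u⟫_ℂ).re := by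
  have hQim : (⟪u, Q u⟫_ℂ).im = 0 := hQ.isSymmetric.im_inner_self_apply u
  have hTim : (⟪u, T u⟫_ℂ).im = 0 := hT.isSymmetric.im_inner_self_apply u
  have hre : (⟪u, (1 + ζ • Q + Complex.I • T) u⟫_ℂ).re
      = ‖u‖ ^ 2 + ζ.re * (⟪u, Q u⟫_ℂ).re := by
    simp [Complex.mul_re, hQim, hTim, ← Complex.ofReal_pow, Complex.ofReal_re]
  rw [hre]
  nlinarith [mul_nonneg hζ (hQnn u)]

theorem isUnit_one_add_add_I_smul (hT : IsSelfAdjoint T) (hQ : IsSelfAdjoint Q)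
    (hQnn : ∀ u : V, 0 ≤ (⟪u, Q u⟫_ℂ).re) : IsUnit (1 + Q + Complex.I • T) :=
  isUnit_of_sq_norm_le_re_inner fun u => by
    simpa only [one_smul] using
      sq_norm_le_re_inner_one_add_smul_add_I_smul hT hQ hQnn (ζ := 1) zero_le_one u

theorem isUnit_and_norm_smul_resolvent_cayley_le (hT : IsSelfAdjoint T) (hQ : IsSelfAdjoint Q)
    (hQnn : ∀ u : V, 0 ≤ (⟪u, Q u⟫_ℂ).re) {z : ℂ} (hz : 1 < ‖z‖) :
    IsUnit (z • 1 - (1 - Q + Complex.I • T) * Ring.inverse (1 + Q + Complex.I • T)) ∧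
      ‖(z - 1) • Ring.inverse
          (z • 1 - (1 - Q + Complex.I • T) * Ring.inverse (1 + Q + Complex.I • T))‖
        ≤ ‖1 + Q + Complex.I • T‖ := by
  set A := 1 + Q + Complex.I • T
  set S := 1 + ((z + 1) / (z - 1)) • Q + Complex.I • T
  have hz1 : z ≠ 1 := by rintro rfl; simp at hz
  have hw : z - 1 ≠ 0 := sub_ne_zero.mpr hz1
  have hScoer := sq_norm_le_re_inner_one_add_smul_add_I_smul hT hQ hQnn
    (Complex.re_add_one_div_sub_one_nonneg hz.le)
  have hA : IsUnit A := isUnit_one_add_add_I_smul hT hQ hQnn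
  have hS : IsUnit S := isUnit_of_sq_norm_le_re_inner hScoer
  have hfactor : z • 1 - (1 - Q + Complex.I • T) * Ring.inverse A
      = (z - 1) • (S * Ring.inverse A) := by
    rw [← smul_mul_assoc, ← smul_sub_eq_smul_one_add_smul_add_I_smul hz1, sub_mul,
      smul_mul_assoc, Ring.mul_inverse_cancel A hA]
  rw [hfactor, Ring.inverse_smul hw, smul_smul, mul_inv_cancel₀ hw, one_smul,
    Ring.inverse_mul (.inl hS), Ring.inverse_inverse hA]
  refine ⟨?_, ?_⟩
  · rw [← Units.smul_mk0 hw, isUnit_smul_iff]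
    exact hS.mul hA.ringInverse
  · calc ‖A * Ring.inverse S‖ ≤ ‖A‖ * ‖Ring.inverse S‖ := norm_mul_le _ _
      _ ≤ ‖A‖ * 1 := by
        gcongr
        exact ContinuousLinearMap.norm_ringInverse_le_one
          (norm_le_norm_apply_of_sq_norm_le_re_inner hScoer)
      _ = ‖A‖ := mul_one _

end Cayley

/-- Let `V` be a complex Hilbert space and `T, Q` bounded selfadjoint
operators on `V` with `Q` nonnegative. Then `I + Q + iT` is boundedly invertible, and
`C := (I − Q + iT)(I + Q + iT)⁻¹` is a Ritt operator: the spectrum of `C` is contained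
in the closed unit disk, and `sup{‖(z − 1)(zI − C)⁻¹‖ : |z| > 1} < ∞` (in particular
`zI − C` is boundedly invertible for every `|z| > 1`). -/
theorem cayley_is_ritt_of_selfAdjoint_nonneg
    {V : Type*} [NormedAddCommGroup V] [InnerProductSpace ℂ V] [CompleteSpace V]
    (T Q : V →L[ℂ] V) (hT : IsSelfAdjoint T) (hQ : IsSelfAdjoint Q)
    (hQnn : ∀ u : V, 0 ≤ (inner ℂ u (Q u) : ℂ).re)
    (C : V →L[ℂ] V)
    (hC : C = ((1 : V →L[ℂ] V) - Q + Complex.I • T) *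
      Ring.inverse ((1 : V →L[ℂ] V) + Q + Complex.I • T)) :
    IsUnit ((1 : V →L[ℂ] V) + Q + Complex.I • T) ∧
    spectrum ℂ C ⊆ Metric.closedBall (0 : ℂ) 1 ∧
    ∃ M : ℝ, ∀ z : ℂ, 1 < ‖z‖ →
      IsUnit (z • (1 : V →L[ℂ] V) - C) ∧
      ‖(z - 1) • Ring.inverse (z • (1 : V →L[ℂ] V) - C)‖ ≤ M := by
  subst hC
  have hres := fun z (hz : 1 < ‖z‖) => isUnit_and_norm_smul_resolvent_cayley_le hT hQ hQnn hz
  exact ⟨isUnit_one_add_add_I_smul hT hQ hQnn,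
    spectrum_subset_closedBall_of_isUnit fun z hz => (hres z hz).1, _, hres⟩
end

section
/- Let V be a complex Hilbert space and T, Q bounded selfadjoint operators on V such that Q is positive and invertible, i.e. there exists η > 0 with ⟨Qu,u⟩ ≥ η‖u‖² for all u ∈ V. Then the operator C := (I − Q + iT)(I + Q + iT)⁻¹ is similar to a contraction. -/
/-!
Take a selfadjoint invertible `P` with `P * P = Q` (the square root of `Q`). Then `P⁻¹ C P` is the
Cayley transform `(M - 1)(M + 1)⁻¹` of `M = P⁻¹ (I + iT) P⁻¹`, and `M` is accretive because
`Re ⟪(I + iT) u, u⟫ = ‖u‖²`. The Cayley transform of an accretive operator is a contraction, since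
`‖(M + 1) w‖² - ‖(M - 1) w‖² = 4 Re ⟪M w, w⟫ ≥ 0`.
-/

open ContinuousLinearMap RCLike
open scoped Ring
open scoped InnerProductSpace

/-- Junk value: `0` when `a + 1` is not invertible. -/
noncomputable def cayley {R : Type*} [Ring R] (a : R) : R := (a - 1) * (a + 1)⁻¹ʳ

theorem IsUnit.cayley_ringInverse_mul_mul {R : Type*} [Ring R] {p : R} (hp : IsUnit p)
    (s : R) : cayley (p⁻¹ʳ * s * p⁻¹ʳ) = p⁻¹ʳ * ((s - p * p) * (s + p * p)⁻¹ʳ) * p := by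
  set m := p⁻¹ʳ * s * p⁻¹ʳ
  have hs : s = p * m * p := by
    simp only [m, ← mul_assoc, Ring.mul_inverse_cancel _ hp, one_mul,
      Ring.inverse_mul_cancel_right _ _ hp]
  have hsub : s - p * p = p * (m - 1) * p := by rw [hs]; noncomm_ring
  have hadd : s + p * p = p * (m + 1) * p := by rw [hs]; noncomm_ring
  rw [hsub, hadd, Ring.inverse_mul (.inr hp), Ring.inverse_mul (.inl hp)]
  simp only [cayley, mul_assoc, Ring.inverse_mul_cancel_left _ _ hp,
    Ring.mul_inverse_cancel_left _ _ hp]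
  simp only [← mul_assoc, Ring.inverse_mul_cancel_right _ _ hp]

def ContinuousLinearMap.IsAccretive {𝕜 E : Type*} [RCLike 𝕜] [NormedAddCommGroup E]
    [InnerProductSpace 𝕜 E] (M : E →L[𝕜] E) : Prop :=
  ∀ x, 0 ≤ re ⟪M x, x⟫_𝕜

section
variable {𝕜 E : Type*} [RCLike 𝕜] [NormedAddCommGroup E] [InnerProductSpace 𝕜 E]

theorem norm_sub_le_norm_add_of_re_inner_nonneg {x y : E} (h : 0 ≤ re ⟪x, y⟫_𝕜) :
    ‖x - y‖ ≤ ‖x + y‖ := by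
  refine pow_le_pow_iff_left₀ (norm_nonneg _) (norm_nonneg _) two_ne_zero |>.mp ?_
  rw [norm_sub_sq (𝕜 := 𝕜), norm_add_sq (𝕜 := 𝕜)]
  linarith

theorem ContinuousLinearMap.IsAccretive.norm_cayley_le_one {M : E →L[𝕜] E} (hM : M.IsAccretive) :
    ‖cayley M‖ ≤ 1 := by
  by_cases hunit : IsUnit (M + 1)
  · refine opNorm_le_bound _ zero_le_one fun x => ?_
    set w := (M + 1)⁻¹ʳ x
    have hx : (M + 1) w = x := by
      rw [← mul_apply_eq_comp, Ring.mul_inverse_cancel _ hunit, one_apply_eq_self]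
    calc ‖cayley M x‖ = ‖M w - w‖ := rfl
      _ ≤ ‖M w + w‖ := norm_sub_le_norm_add_of_re_inner_nonneg (hM w)
      _ = 1 * ‖x‖ := by rw [one_mul, ← hx]; rfl
  · simp [cayley, Ring.inverse_non_unit _ hunit]

variable [CompleteSpace E]

theorem ContinuousLinearMap.IsAccretive.star_mul_mul {M : E →L[𝕜] E} (hM : M.IsAccretive)
    (b : E →L[𝕜] E) : (star b * M * b).IsAccretive := fun x => by
  simpa [star_eq_adjoint, adjoint_inner_left] using hM (b x)

end

section
variable {E : Type*} [NormedAddCommGroup E] [InnerProductSpace ℂ E] [CompleteSpace E]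

theorem IsSelfAdjoint.isAccretive_one_add_I_smul {T : E →L[ℂ] E} (hT : IsSelfAdjoint T) :
    (1 + Complex.I • T).IsAccretive := fun x => by
  have hreal : im ⟪T x, x⟫_ℂ = 0 :=
    (congrArg im (hT.isSymmetric x x)).trans (hT.isSymmetric.im_inner_self_apply x)
  simp only [im_to_complex] at hreal
  simp [inner_add_left, inner_smul_left, hreal, ← Complex.ofReal_pow]

theorem IsSelfAdjoint.isStrictlyPositive_of_le_re_inner {Q : E →L[ℂ] E} (hQ : IsSelfAdjoint Q)
    {η : ℝ} (hη : 0 < η) (h : ∀ u, η * ‖u‖ ^ 2 ≤ (⟪u, Q u⟫_ℂ).re) : IsStrictlyPositive Q := by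
  refine (isStrictlyPositive_algebraMap hη).of_le ?_
  rw [le_def, isPositive_def']
  refine ⟨hQ.sub (.algebraMap _ (.all η)), fun u => ?_⟩
  have hη_inner : (⟪η • u, u⟫_ℂ).re = η * ‖u‖ ^ 2 := by
    rw [← Complex.coe_smul, inner_smul_left, Complex.conj_ofReal, Complex.re_ofReal_mul,
      ← re_to_complex, inner_self_eq_norm_sq]
  have hu := h u
  rw [← re_to_complex, inner_re_symm, re_to_complex] at hu
  simp only [reApplyInnerSelf_apply, sub_apply, inner_sub_left, Algebra.algebraMap_eq_smul_one,
    smul_apply, one_apply_eq_self, map_sub]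
  rw [re_to_complex, re_to_complex, hη_inner]
  linarith

end

/-- Let `V` be a complex Hilbert space and `T, Q` bounded selfadjoint
operators on `V` such that `Q` is positive and invertible, i.e. there exists `η > 0`
with `⟨Qu, u⟩ ≥ η‖u‖²` for all `u ∈ V`. Then the operator
`C := (I − Q + iT)(I + Q + iT)⁻¹` is similar to a contraction. -/
theorem cayley_similar_contraction_of_invertible_Q
    {V : Type*} [NormedAddCommGroup V] [InnerProductSpace ℂ V] [CompleteSpace V]
    (T Q : V →L[ℂ] V) (hT : IsSelfAdjoint T) (hQ : IsSelfAdjoint Q)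
    (hQpos : ∃ η > (0 : ℝ), ∀ u : V, η * ‖u‖ ^ 2 ≤ (inner ℂ u (Q u) : ℂ).re)
    (C : V →L[ℂ] V)
    (hC : C = ((1 : V →L[ℂ] V) - Q + Complex.I • T) *
      Ring.inverse ((1 : V →L[ℂ] V) + Q + Complex.I • T)) :
    ∃ R : V →L[ℂ] V, IsUnit R ∧ ‖R * C * Ring.inverse R‖ ≤ 1 := by
  obtain ⟨η, hη, hcoer⟩ := hQpos
  obtain ⟨P, hP, hPsa, rfl⟩ :=
    CStarAlgebra.isStrictlyPositive_iff_exists_isUnit_and_isSelfAdjoint_and_eq_mul_self.mp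
      (hQ.isStrictlyPositive_of_le_re_inner hη hcoer)
  refine ⟨P⁻¹ʳ, hP.ringInverse, ?_⟩
  have hsub : 1 - P * P + Complex.I • T = (1 + Complex.I • T) - P * P := by abel
  have hadd : 1 + P * P + Complex.I • T = (1 + Complex.I • T) + P * P := by abel
  have hM := hT.isAccretive_one_add_I_smul.star_mul_mul P⁻¹ʳ
  rw [hPsa.ringInverse.star_eq] at hM
  rw [hC, hsub, hadd, Ring.inverse_inverse hP, ← hP.cayley_ringInverse_mul_mul]
  exact hM.norm_cayley_le_one
end
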